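/- arXiv:1912.02717 — 2 statements merged into one kernel-verified Lean document; each statement's English description precedes it below -/
import Mathlib

section
/- Let p be a prime, G a finite group, and H ≤ G a subgroup isomorphic to C_p × C_p (the direct product of two cyclic groups of order p). Then every generating multiset S of G with |S| ≤ [G:H] is Nielsen equivalent to a multiset contained in a left-right transversal of H in G. -/
open scoped Classical

section Defs

variable {G : Type*} [Group G]

/-- A single Nielsen move on a finite multiset of group elements: replace one
occurrence of `g` by `g⁻¹`, or by `h * g` or `g * h` where `h` is another
occurrence in the multiset. -/
def NielsenMove (S T : Multiset G) : Prop :=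
  (∃ g ∈ S, T = g⁻¹ ::ₘ S.erase g) ∨
    (∃ g ∈ S, ∃ h ∈ S.erase g, T = h * g ::ₘ S.erase g ∨ T = g * h ::ₘ S.erase g)

/-- Nielsen equivalence: one multiset is obtained from the other by a finite
sequence of Nielsen moves. -/
def NielsenEquiv (S T : Multiset G) : Prop :=
  Relation.ReflTransGen NielsenMove S T

/-- The elements of the multiset `S` lie in pairwise distinct left cosets of `H`. -/
def LeftDistinct (H : Subgroup G) (S : Multiset G) : Prop :=
  (S.map fun x => ((x : G) : G ⧸ H)).Nodup

/-- The elements of the multiset `S` lie in pairwise distinct right cosets of `H`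
(using that `Hx = Hy ↔ x⁻¹H = y⁻¹H`). -/
def RightDistinct (H : Subgroup G) (S : Multiset G) : Prop :=
  (S.map fun x => ((x⁻¹ : G) : G ⧸ H)).Nodup

/-- `T` is a left transversal of `H`: it contains exactly one element of each
left coset of `H`. -/
def IsLeftTransversal (H : Subgroup G) (T : Set G) : Prop :=
  ∀ g : G, ∃! t, t ∈ T ∧ ((t : G) : G ⧸ H) = ((g : G) : G ⧸ H)

/-- `T` is a right transversal of `H`: it contains exactly one element of each
right coset of `H` (using that `Hx = Hy ↔ x⁻¹H = y⁻¹H`). -/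
def IsRightTransversal (H : Subgroup G) (T : Set G) : Prop :=
  ∀ g : G, ∃! t, t ∈ T ∧ ((t⁻¹ : G) : G ⧸ H) = ((g⁻¹ : G) : G ⧸ H)

/-- The left coset `aH` as a set. -/
def lcoset (a : G) (H : Subgroup G) : Set G := {x | a⁻¹ * x ∈ H}

/-- The right coset `Ha` as a set. -/
def rcoset (H : Subgroup G) (a : G) : Set G := {x | x * a⁻¹ ∈ H}

/-- The double coset `HgH` as a set. -/
def dcoset (H : Subgroup G) (g : G) : Set G := {x | ∃ h₁ ∈ H, ∃ h₂ ∈ H, x = h₁ * g * h₂}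

/-- `S` is left-right clean relative to `H`: `S ∖ H` is nonempty and its elements
lie in pairwise distinct left cosets and pairwise distinct right cosets of `H`. -/
def LeftRightClean (H : Subgroup G) (S : Multiset G) : Prop :=
  (∃ x ∈ S, x ∉ H) ∧
    LeftDistinct H (S.filter fun x => x ∉ H) ∧
    RightDistinct H (S.filter fun x => x ∉ H)

end Defs

/-! Nielsen moves first turn every element outside `H` that shares a left or a right coset with
another element into an element of `H`. Inside `H ≅ C_p × C_p` two elements either generate `H`
or one is a power of the other, so the elements in `H` reduce to copies of a single `t`, or to `B`
and copies of `A` with `⟨A, B⟩ = H`. A set whose distinct elements lie in distinct left and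
distinct right cosets extends to a left-right transversal: a double coset `HxH` contains as many
left as right cosets, and each of its left cosets meets each of its right cosets.

It remains to move `B` to a fresh left and right coset. If the left cosets of the elements
outside `H` are permuted by `H`, then `B` becomes some `uBv` with `u, v` in the subgroup `K`
generated by the others and `uBv` in a new left coset: otherwise `KH = G` and fewer than `[G:H]`
elements would meet all `[G:H]` left cosets. Its right coset is then new as well. Otherwise some
double coset `HxH` has a free left coset; the other elements of `HxH` are moved aside using `H`,
and `B` becomes `AxBv` with `v ∈ {1, A}`, after replacing `A` by `AB` if `A` fixes `xH`. -/

section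

open Multiset DoubleCoset
open scoped Pointwise

variable {G : Type*} [Group G]

namespace NielsenMove

variable {S T : Multiset G}

theorem add_right (h : NielsenMove S T) (U : Multiset G) : NielsenMove (S + U) (T + U) := by
  rcases h with ⟨g, hg, rfl⟩ | ⟨g, hg, h, hh, rfl | rfl⟩
  · exact .inl ⟨g, mem_add.2 (.inl hg), by rw [erase_add_left_pos U hg, cons_add]⟩
  · refine .inr ⟨g, mem_add.2 (.inl hg), h, ?_, .inl ?_⟩ <;>
      simp [erase_add_left_pos U hg, hh]
  · refine .inr ⟨g, mem_add.2 (.inl hg), h, ?_, .inr ?_⟩ <;>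
      simp [erase_add_left_pos U hg, hh]

theorem card_eq (h : NielsenMove S T) : card S = card T := by
  rcases h with ⟨g, hg, rfl⟩ | ⟨g, hg, h, -, rfl | rfl⟩ <;>
  simp [card_erase_add_one hg]

/-- A move can be undone by moves. -/
theorem closure_le (h : NielsenMove S T) :
    Subgroup.closure {x : G | x ∈ S} ≤ Subgroup.closure {x : G | x ∈ T} := by
  obtain ⟨g, hg, g', hg', rfl⟩ : ∃ g ∈ S, ∃ g', g ∈ Subgroup.closure {x : G | x ∈ g' ::ₘ S.erase g}
      ∧ T = g' ::ₘ S.erase g := by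
    have mem {g y : G} (hy : y ∈ S.erase g) (g' : G) :
        y ∈ Subgroup.closure {x : G | x ∈ g' ::ₘ S.erase g} :=
      Subgroup.subset_closure (mem_cons_of_mem hy)
    have self (g g' : G) : g' ∈ Subgroup.closure {x : G | x ∈ g' ::ₘ S.erase g} :=
      Subgroup.subset_closure (mem_cons_self _ _)
    rcases h with ⟨g, hg, rfl⟩ | ⟨g, hg, h, hh, rfl | rfl⟩
    · exact ⟨g, hg, _, by simpa using inv_mem (self g g⁻¹), rfl⟩
    · exact ⟨g, hg, _, by simpa using mul_mem (inv_mem (mem hh _)) (self g (h * g)), rfl⟩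
    · exact ⟨g, hg, _, by simpa using mul_mem (self g (g * h)) (inv_mem (mem hh _)), rfl⟩
  rw [Subgroup.closure_le]
  intro y hy
  rcases mem_cons.1 ((cons_erase hg).symm ▸ hy : y ∈ g ::ₘ S.erase g) with rfl | hy
  · exact hg'
  · exact Subgroup.subset_closure (mem_cons_of_mem hy)

end NielsenMove

namespace NielsenEquiv

variable {S T U M : Multiset G}

theorem refl (S : Multiset G) : NielsenEquiv S S := Relation.ReflTransGen.refl

theorem trans (h₁ : NielsenEquiv S T) (h₂ : NielsenEquiv T U) : NielsenEquiv S U :=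
  Relation.ReflTransGen.trans h₁ h₂

theorem add_right (h : NielsenEquiv S T) (U : Multiset G) : NielsenEquiv (S + U) (T + U) :=
  Relation.ReflTransGen.lift (· + U) (fun _ _ (hm : NielsenMove _ _) => hm.add_right U) _ _ h

theorem add_left (h : NielsenEquiv S T) (U : Multiset G) : NielsenEquiv (U + S) (U + T) := by
  simpa only [add_comm U] using h.add_right U

theorem cons (h : NielsenEquiv S T) (g : G) : NielsenEquiv (g ::ₘ S) (g ::ₘ T) := by
  simpa only [singleton_add] using h.add_left {g}

theorem card_eq (h : NielsenEquiv S T) : card S = card T := by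
  induction h with
  | refl => rfl
  | tail _ hm ih => exact ih.trans hm.card_eq

theorem closure_le (h : NielsenEquiv S T) :
    Subgroup.closure {x : G | x ∈ S} ≤ Subgroup.closure {x : G | x ∈ T} := by
  induction h with
  | refl => exact le_rfl
  | tail _ hm ih => exact ih.trans hm.closure_le

theorem inv_cons (g : G) (M : Multiset G) : NielsenEquiv (g ::ₘ M) (g⁻¹ ::ₘ M) :=
  .single (.inl ⟨g, mem_cons_self g M, by rw [erase_cons_head]⟩)

theorem mul_left_cons {h : G} (hh : h ∈ M) (g : G) : NielsenEquiv (g ::ₘ M) (h * g ::ₘ M) :=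
  .single (.inr ⟨g, mem_cons_self g M, h, by rwa [erase_cons_head], .inl (by rw [erase_cons_head])⟩)

theorem mul_right_cons {h : G} (hh : h ∈ M) (g : G) : NielsenEquiv (g ::ₘ M) (g * h ::ₘ M) :=
  .single (.inr ⟨g, mem_cons_self g M, h, by rwa [erase_cons_head], .inr (by rw [erase_cons_head])⟩)

/-- Invert `h`, multiply, and invert `h` back. -/
theorem inv_mul_left_cons {h : G} (hh : h ∈ M) (g : G) :
    NielsenEquiv (g ::ₘ M) (h⁻¹ * g ::ₘ M) := by
  obtain ⟨M, rfl⟩ := exists_cons_of_mem hh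
  have h₁ := (inv_cons h M).cons g
  have h₂ := mul_left_cons (mem_cons_self h⁻¹ M) g
  have h₃ := ((inv_cons h⁻¹ M).cons (h⁻¹ * g))
  rw [inv_inv] at h₃
  exact h₁.trans (h₂.trans h₃)

theorem mul_inv_right_cons {h : G} (hh : h ∈ M) (g : G) :
    NielsenEquiv (g ::ₘ M) (g * h⁻¹ ::ₘ M) := by
  obtain ⟨M, rfl⟩ := exists_cons_of_mem hh
  have h₁ := (inv_cons h M).cons g
  have h₂ := mul_right_cons (mem_cons_self h⁻¹ M) g
  have h₃ := ((inv_cons h⁻¹ M).cons (g * h⁻¹))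
  rw [inv_inv] at h₃
  exact h₁.trans (h₂.trans h₃)

theorem mul_left_cons_of_mem_closure {u : G} (hu : u ∈ Subgroup.closure {x : G | x ∈ M})
    (g : G) : NielsenEquiv (g ::ₘ M) (u * g ::ₘ M) := by
  induction hu using Subgroup.closure_induction'' generalizing g with
  | mem x hx => exact mul_left_cons hx g
  | inv_mem x hx => exact inv_mul_left_cons hx g
  | one => simpa using refl _
  | mul x y _ _ hx hy => simpa [mul_assoc] using (hy g).trans (hx (y * g))

theorem mul_right_cons_of_mem_closure {v : G} (hv : v ∈ Subgroup.closure {x : G | x ∈ M})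
    (g : G) : NielsenEquiv (g ::ₘ M) (g * v ::ₘ M) := by
  induction hv using Subgroup.closure_induction'' generalizing g with
  | mem x hx => exact mul_right_cons hx g
  | inv_mem x hx => exact mul_inv_right_cons hx g
  | one => simpa using refl _
  | mul x y _ _ hx hy => simpa [mul_assoc] using (hx g).trans (hy (g * x))

theorem cons_of_mem_closure {u v : G} (hu : u ∈ Subgroup.closure {x : G | x ∈ M})
    (hv : v ∈ Subgroup.closure {x : G | x ∈ M}) (g : G) :
    NielsenEquiv (g ::ₘ M) (u * g * v ::ₘ M) :=
  (mul_left_cons_of_mem_closure hu g).trans (mul_right_cons_of_mem_closure hv _)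

theorem cons_of_inv_mul_mem_closure {M : Multiset G} {g t : G}
    (h : g⁻¹ * t ∈ Subgroup.closure {x : G | x ∈ M}) : NielsenEquiv (g ::ₘ M) (t ::ₘ M) := by
  simpa using mul_right_cons_of_mem_closure h g

theorem add_map {N : Multiset G} {f : G → G} (hf : ∀ y ∈ N, ∃ u ∈ Subgroup.closure {x : G | x ∈ M},
    ∃ v ∈ Subgroup.closure {x : G | x ∈ M}, f y = u * y * v) :
    NielsenEquiv (N + M) (N.map f + M) := by
  induction N using Multiset.induction_on with
  | empty => exact refl _
  | cons y N ih =>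
    obtain ⟨u, hu, v, hv, hfy⟩ := hf y (mem_cons_self y N)
    have hle : Subgroup.closure {x : G | x ∈ M} ≤ Subgroup.closure {x : G | x ∈ N + M} :=
      Subgroup.closure_mono fun x hx => mem_add.2 (.inr hx)
    rw [cons_add, map_cons, cons_add, hfy]
    exact (cons_of_mem_closure (hle hu) (hle hv) y).trans
      ((ih fun z hz => hf z (mem_cons_of_mem hz)).cons _)

end NielsenEquiv

instance : @Trans (Multiset G) (Multiset G) (Multiset G) NielsenEquiv NielsenEquiv NielsenEquiv :=
  ⟨NielsenEquiv.trans⟩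

namespace Multiset

theorem ncard_setOf_mem_le_card {α : Type*} (M : Multiset α) :
    {a | a ∈ M}.ncard ≤ card M := by
  classical
  rw [show {a | a ∈ M} = (M.toFinset : Set α) by ext; simp, Set.ncard_coe_finset]
  exact toFinset_card_le M

theorem ncard_setOf_mem_of_nodup {α : Type*} {M : Multiset α} (hM : M.Nodup) :
    {a | a ∈ M}.ncard = card M := by
  classical
  rw [show {a | a ∈ M} = (M.toFinset : Set α) by ext; simp, Set.ncard_coe_finset,
    toFinset_card_of_nodup hM]

theorem exists_eq_cons_cons_of_not_nodup_map_filter {α β : Type*} {p : α → Prop}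
    [DecidablePred p] {f : α → β} {S : Multiset α} (h : ¬((S.filter p).map f).Nodup) :
    ∃ x y R, S = x ::ₘ y ::ₘ R ∧ p x ∧ p y ∧ f x = f y := by
  classical
  obtain ⟨b, t, hbt⟩ : ∃ b t, (S.filter p).map f = b ::ₘ b ::ₘ t := by
    simpa [nodup_iff_ne_cons_cons] using h
  obtain ⟨x, hx, hfx, hx'⟩ := (map_eq_cons _ _ _ _).2 hbt
  obtain ⟨y, hy, hfy, -⟩ := (map_eq_cons _ _ _ _).2 hx'
  have hyS : y ∈ S.erase x := mem_of_le (erase_le_erase x (filter_le p S)) hy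
  refine ⟨x, y, (S.erase x).erase y, ?_, (mem_filter.1 hx).2,
    (mem_filter.1 (mem_of_mem_erase hy)).2, hfx.trans hfy.symm⟩
  rw [cons_erase hyS, cons_erase (mem_of_mem_filter hx)]

end Multiset

namespace Subgroup

theorem mem_zpowers_or_closure_pair_eq {p : ℕ} (hp : p.Prime) {H : Subgroup G}
    (hH : Nat.card H = p ^ 2) {a b : G} (ha : a ∈ H) (hb : b ∈ H) :
    a ∈ zpowers b ∨ b ∈ zpowers a ∨ closure {a, b} = H := by
  by_cases hb1 : b = 1
  · exact .inr (.inl (hb1 ▸ one_mem _))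
  set K := closure {a, b}
  have : Finite H := Nat.finite_of_card_ne_zero (by rw [hH]; exact pow_ne_zero 2 hp.ne_zero)
  have hKH : K ≤ H := (closure_le H).2 (Set.insert_subset_iff.2 ⟨ha, Set.singleton_subset_iff.2 hb⟩)
  have hbK : zpowers b ≤ K := zpowers_le.2 (subset_closure (by simp))
  obtain ⟨i, hi, hK⟩ := (Nat.dvd_prime_pow hp).1 (hH ▸ card_dvd_of_le hKH)
  have hb : Nat.card (zpowers b) ≠ 1 := by rwa [Ne, card_eq_one, zpowers_eq_bot]
  interval_cases i
  · exact absurd (Nat.eq_one_of_dvd_one (by simpa [hK] using card_dvd_of_le hbK)) hb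
  · have : Finite K := Nat.finite_of_card_ne_zero (by rw [hK]; exact pow_ne_zero 1 hp.ne_zero)
    have hbK' : zpowers b = K := eq_of_le_of_card_ge hbK <| by
      rw [hK, pow_one]
      exact ((hp.eq_one_or_self_of_dvd _ (pow_one p ▸ hK ▸ card_dvd_of_le hbK)).resolve_left hb).ge
    exact .inl (hbK' ▸ subset_closure (by simp))
  · exact .inr (.inr (eq_of_le_of_card_ge hKH (by rw [hH, hK])))

theorem closure_pair_le_of_mem_of_mul_mem {S : Subgroup G} {a b : G} (ha : a ∈ S)
    (hab : a * b ∈ S) : closure {a, b} ≤ S := by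
  refine (closure_le S).2 (Set.insert_subset_iff.2 ⟨ha, Set.singleton_subset_iff.2 ?_⟩)
  simpa using mul_mem (inv_mem ha) hab

theorem closure_pair_mul_left (a b : G) : closure {a * b, b} = closure {a, b} := by
  have hb (c : G) : b ∈ closure {c, b} := subset_closure (by simp)
  have hc (c : G) : c ∈ closure {c, b} := subset_closure (by simp)
  refine le_antisymm ((closure_le _).2 ?_) ((closure_le _).2 ?_) <;>
    simp only [Set.insert_subset_iff, Set.singleton_subset_iff, SetLike.mem_coe, hb, and_true]
  · exact mul_mem (hc a) (hb a)
  · simpa using mul_mem (hc (a * b)) (inv_mem (hb _))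

/-- The set `KH` is stable under left multiplication by `K` and by `B`, hence by everything. -/
theorem mul_eq_univ_of_forall_mul_mem [Finite G] {H K : Subgroup G} {B : G}
    (hgen : closure (insert B (K : Set G)) = ⊤) (hBK : ∀ v ∈ K, B * v ∈ (K : Set G) * (H : Set G)) :
    (K : Set G) * (H : Set G) = Set.univ := by
  set P := (K : Set G) * (H : Set G)
  have hstab {g : G} (hg : ∀ v ∈ K, ∀ h ∈ H, g * (v * h) ∈ P) : g ∈ MulAction.stabilizer G P := by
    refine MulAction.mem_stabilizer_iff.2
      (Set.eq_of_subset_of_ncard_le ?_ (Set.ncard_smul_set g P).ge)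
    rintro _ ⟨_, ⟨v, hv, h, hh, rfl⟩, rfl⟩
    exact hg v hv h hh
  have htop : MulAction.stabilizer G P = ⊤ := top_le_iff.1 <| hgen ▸ (closure_le _).2 <|
    Set.insert_subset_iff.2 ⟨hstab fun v hv h hh => ?_, fun k hk => hstab fun v hv h hh =>
      ⟨k * v, mul_mem hk hv, h, hh, mul_assoc _ _ _⟩⟩
  · obtain ⟨k, hk, h', hh', he⟩ := hBK v hv
    exact ⟨k, hk, h' * h, mul_mem hh' hh, by simp only at he ⊢; rw [← mul_assoc, he, mul_assoc]⟩
  · refine Set.eq_univ_of_forall fun g => ?_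
    have hg : g • P = P := MulAction.mem_stabilizer_iff.1 (htop ▸ mem_top g)
    have h1 : (1 : G) ∈ P := ⟨1, one_mem K, 1, one_mem H, mul_one 1⟩
    simpa [hg] using Set.smul_mem_smul_set (a := g) h1

end Subgroup

section Cosets

variable (H : Subgroup G)

def leftClass (g : G) : G ⧸ H := g

/-- The right coset `Hg`, encoded as the left coset `g⁻¹H` as in `IsRightTransversal`. -/
def rightClass (g : G) : G ⧸ H := (g⁻¹ : G)

def CosetSeparated (s : Set G) : Prop :=
  s.InjOn (leftClass H) ∧ s.InjOn (rightClass H)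

variable {H} {a b h x : G}

theorem leftClass_eq_iff : leftClass H a = leftClass H b ↔ a⁻¹ * b ∈ H := QuotientGroup.eq

theorem rightClass_eq_iff : rightClass H a = rightClass H b ↔ a * b⁻¹ ∈ H := by
  rw [rightClass, rightClass, QuotientGroup.eq, inv_inv]

theorem leftClass_mul_of_mem (a : G) (hh : h ∈ H) : leftClass H (a * h) = leftClass H a := by
  simpa [leftClass_eq_iff] using inv_mem hh

theorem rightClass_mul_of_mem (hh : h ∈ H) (a : G) : rightClass H (h * a) = rightClass H a := by
  simpa [rightClass_eq_iff] using inv_mem hh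

theorem mem_of_leftClass_eq (hab : leftClass H a = leftClass H b) (ha : a ∈ H) : b ∈ H := by
  simpa using mul_mem ha (leftClass_eq_iff.1 hab)

theorem mem_of_rightClass_eq (hab : rightClass H a = rightClass H b) (ha : a ∈ H) : b ∈ H := by
  simpa using mul_mem (inv_mem (rightClass_eq_iff.1 hab)) ha

theorem leftClass_mul_eq_iff :
    leftClass H (h * x) = leftClass H x ↔ h ∈ MulAction.stabilizer G (leftClass H x) := by
  rw [MulAction.mem_stabilizer_iff]
  rfl

theorem rightClass_mul_eq_iff :
    rightClass H (x * h) = rightClass H x ↔ h ∈ MulAction.stabilizer G (rightClass H x) := by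
  rw [← inv_mem_iff, MulAction.mem_stabilizer_iff, rightClass, rightClass, mul_inv_rev]
  rfl

theorem mem_doubleCoset_of_leftClass_eq (hab : leftClass H a = leftClass H b)
    (ha : a ∈ doubleCoset x H H) : b ∈ doubleCoset x H H := by
  obtain ⟨h₁, hh₁, h₂, hh₂, rfl⟩ := mem_doubleCoset.1 ha
  exact mem_doubleCoset.2 ⟨h₁, hh₁, h₂ * ((h₁ * x * h₂)⁻¹ * b),
    mul_mem hh₂ (leftClass_eq_iff.1 hab), by group⟩

theorem mem_doubleCoset_of_rightClass_eq (hab : rightClass H a = rightClass H b)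
    (ha : a ∈ doubleCoset x H H) : b ∈ doubleCoset x H H := by
  obtain ⟨h₁, hh₁, h₂, hh₂, rfl⟩ := mem_doubleCoset.1 ha
  exact mem_doubleCoset.2 ⟨(h₁ * x * h₂ * b⁻¹)⁻¹ * h₁,
    mul_mem (inv_mem (rightClass_eq_iff.1 hab)) hh₁, h₂, hh₂, by group⟩

theorem not_mem_doubleCoset_of_mem (hx : x ∉ H) (hh : h ∈ H) : h ∉ doubleCoset x H H := by
  intro hmem
  obtain ⟨h₁, hh₁, h₂, hh₂, rfl⟩ := mem_doubleCoset.1 hmem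
  have := mul_mem (mul_mem (inv_mem hh₁) hh) (inv_mem hh₂)
  exact hx (by rwa [show h₁⁻¹ * (h₁ * x * h₂) * h₂⁻¹ = x by group] at this)

theorem inv_doubleCoset (x : G) : (doubleCoset x H H)⁻¹ = doubleCoset x⁻¹ H H := by
  ext g
  simp only [Set.mem_inv, mem_doubleCoset]
  constructor <;> rintro ⟨h₁, hh₁, h₂, hh₂, hg⟩
  · exact ⟨h₂⁻¹, inv_mem hh₂, h₁⁻¹, inv_mem hh₁, by rw [← inv_inv g, hg]; group⟩
  · exact ⟨h₂⁻¹, inv_mem hh₂, h₁⁻¹, inv_mem hh₁, by rw [hg]; group⟩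

theorem exists_mem_doubleCoset_leftClass_rightClass_eq {c r : G ⧸ H}
    (hc : c ∈ leftClass H '' doubleCoset x H H) (hr : r ∈ rightClass H '' doubleCoset x H H) :
    ∃ g ∈ doubleCoset x H H, leftClass H g = c ∧ rightClass H g = r := by
  obtain ⟨a, ha, rfl⟩ := hc
  obtain ⟨b, hb, rfl⟩ := hr
  rw [← doubleCoset_eq_of_mem ha] at hb
  obtain ⟨h₁, hh₁, h₂, hh₂, rfl⟩ := mem_doubleCoset.1 hb
  exact ⟨a * h₂, mem_doubleCoset_of_leftClass_eq (leftClass_mul_of_mem a hh₂).symm ha,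
    leftClass_mul_of_mem a hh₂, by rw [mul_assoc, rightClass_mul_of_mem hh₁]⟩

theorem ncard_doubleCoset (x : G) :
    (doubleCoset x H H).ncard = Nat.card H * (leftClass H '' doubleCoset x H H).ncard := by
  have hD : doubleCoset x H H * (H : Set G) = doubleCoset x H H := by
    rw [doubleCoset, mul_assoc, coe_mul_coe]
  rw [← Nat.card_coe_set_eq, ← Nat.card_coe_set_eq, ← QuotientGroup.card_preimage_mk,
    show leftClass H = QuotientGroup.mk from rfl, QuotientGroup.preimage_image_mk_eq_mul, hD]

variable [Finite G]

theorem ncard_rightClass_image_doubleCoset (x : G) :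
    (rightClass H '' doubleCoset x H H).ncard = (leftClass H '' doubleCoset x H H).ncard := by
  have himage : rightClass H '' doubleCoset x H H = leftClass H '' doubleCoset x⁻¹ H H := by
    rw [← inv_doubleCoset, ← Set.image_inv_eq_inv, Set.image_image]; rfl
  refine Nat.eq_of_mul_eq_mul_left (Nat.card_pos (α := H)) ?_
  rw [himage, ← ncard_doubleCoset, ← ncard_doubleCoset, ← inv_doubleCoset, Set.ncard_inv]

/-- A double coset contains as many left as right cosets, and a left and a right coset inside
it always meet. -/
theorem exists_mem_doubleCoset_avoiding (x : G) {FL FR : Set (G ⧸ H)}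
    (hL : FL.ncard < (leftClass H '' doubleCoset x H H).ncard)
    (hR : FR.ncard < (leftClass H '' doubleCoset x H H).ncard) :
    ∃ g ∈ doubleCoset x H H, leftClass H g ∉ FL ∧ rightClass H g ∉ FR := by
  rw [← ncard_rightClass_image_doubleCoset] at hR
  obtain ⟨c, hc, hcL⟩ := Set.exists_mem_notMem_of_ncard_lt_ncard hL
  obtain ⟨r, hr, hrR⟩ := Set.exists_mem_notMem_of_ncard_lt_ncard hR
  obtain ⟨g, hg, rfl, rfl⟩ := exists_mem_doubleCoset_leftClass_rightClass_eq hc hr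
  exact ⟨g, hg, hcL, hrR⟩

theorem leftClass_eq_of_le_stabilizer_rightClass
    (hH : H ≤ MulAction.stabilizer G (rightClass H x)) (ha : a ∈ doubleCoset x H H)
    (hb : b ∈ doubleCoset x H H) : leftClass H a = leftClass H b := by
  have hR : ∀ g ∈ doubleCoset x H H, rightClass H g = rightClass H x := by
    intro g hg
    obtain ⟨h₁, hh₁, h₂, hh₂, rfl⟩ := mem_doubleCoset.1 hg
    rw [mul_assoc, rightClass_mul_of_mem hh₁, rightClass_mul_eq_iff.2 (hH hh₂)]
  have hle : (rightClass H '' doubleCoset x H H).ncard ≤ 1 := by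
    rw [Set.ncard_le_one]
    rintro _ ⟨c, hc, rfl⟩ _ ⟨d, hd, rfl⟩
    rw [hR c hc, hR d hd]
  rw [ncard_rightClass_image_doubleCoset, Set.ncard_le_one] at hle
  exact hle _ ⟨a, ha, rfl⟩ _ ⟨b, hb, rfl⟩

end Cosets

namespace CosetSeparated

variable {H : Subgroup G}

theorem mono {s t : Set G} (ht : CosetSeparated H t)
    (hst : s ⊆ t) : CosetSeparated H s :=
  ⟨ht.1.mono hst, ht.2.mono hst⟩

theorem insert {V : Set G} {g : G} (hV : CosetSeparated H V)
    (hl : leftClass H g ∉ leftClass H '' V) (hr : rightClass H g ∉ rightClass H '' V) :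
    CosetSeparated H (insert g V) := by
  have hg : g ∉ V := fun h => hl ⟨g, h, rfl⟩
  exact ⟨(Set.injOn_insert hg).2 ⟨hV.1, hl⟩, (Set.injOn_insert hg).2 ⟨hV.2, hr⟩⟩

theorem union {s t : Set G} (hs : CosetSeparated H s)
    (ht : CosetSeparated H t)
    (hst : ∀ a ∈ s, ∀ b ∈ t, leftClass H a ≠ leftClass H b ∧ rightClass H a ≠ rightClass H b) :
    CosetSeparated H (s ∪ t) := by
  have hdisj : Disjoint s t :=
    Set.disjoint_left.2 fun a ha hat => (hst a ha a hat).1 rfl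
  exact ⟨(Set.injOn_union hdisj).2 ⟨hs.1, ht.1, fun a ha b hb => (hst a ha b hb).1⟩,
    (Set.injOn_union hdisj).2 ⟨hs.2, ht.2, fun a ha b hb => (hst a ha b hb).2⟩⟩

theorem pair {a b : G} (hl : leftClass H a ≠ leftClass H b)
    (hr : rightClass H a ≠ rightClass H b) : CosetSeparated H {a, b} := by
  refine CosetSeparated.insert ⟨Set.injOn_singleton _ _, Set.injOn_singleton _ _⟩ ?_ ?_ <;>
    rwa [Set.image_singleton, Set.mem_singleton_iff]

theorem pair_mul_mul {a w x : G} (ha : a ∈ H) (hw : w ∈ H)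
    (hl : leftClass H (a * x) ≠ leftClass H x) (hr : rightClass H (x * w) ≠ rightClass H x) :
    CosetSeparated H {x, a * x * w} := by
  refine pair (fun h => hl ?_) (fun h => hr ?_)
  · rw [h, leftClass_mul_of_mem _ hw]
  · rw [h, mul_assoc, rightClass_mul_of_mem ha]

theorem union_of_subset_doubleCoset {s t : Set G} {x : G} (hs : CosetSeparated H s)
    (ht : CosetSeparated H t) (hsD : s ⊆ doubleCoset x H H)
    (htD : ∀ b ∈ t, b ∉ doubleCoset x H H) : CosetSeparated H (s ∪ t) :=
  hs.union ht fun _ ha b hb =>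
    ⟨fun h => htD b hb (mem_doubleCoset_of_leftClass_eq h (hsD ha)),
      fun h => htD b hb (mem_doubleCoset_of_rightClass_eq h (hsD ha))⟩

variable [Finite G] {V : Set G}

theorem ncard_le_index (hV : CosetSeparated H V) : V.ncard ≤ H.index := by
  rw [← hV.1.ncard_image, Subgroup.index, ← Set.ncard_univ]
  exact Set.ncard_le_ncard (Set.subset_univ _)

/-- A free left coset lies in some double coset `D`; the elements of `V` in `D` fill equally many
left and right cosets of `D`, so `D` also has a free right coset. -/
theorem exists_extension (hV : CosetSeparated H V) (hlt : V.ncard < H.index) :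
    ∃ g, leftClass H g ∉ leftClass H '' V ∧ rightClass H g ∉ rightClass H '' V := by
  obtain ⟨c, -, hc⟩ : ∃ c ∈ Set.univ, c ∉ leftClass H '' V := by
    refine Set.exists_mem_notMem_of_ncard_lt_ncard ?_
    rwa [hV.1.ncard_image, Set.ncard_univ]
  obtain ⟨x, rfl⟩ := QuotientGroup.mk_surjective c
  set D := doubleCoset x H H
  have hVD : (leftClass H '' (V ∩ D)).ncard < (leftClass H '' D).ncard := by
    refine Set.ncard_lt_ncard ((Set.ssubset_iff_of_subset (Set.image_mono Set.inter_subset_right)).2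
      ⟨leftClass H x, ⟨x, mem_doubleCoset_self _ _ x, rfl⟩,
        fun h => hc (Set.image_mono Set.inter_subset_left h)⟩)
  have hVD' : (rightClass H '' (V ∩ D)).ncard < (leftClass H '' D).ncard := by
    rwa [(hV.2.mono Set.inter_subset_left).ncard_image,
      ← (hV.1.mono Set.inter_subset_left).ncard_image]
  obtain ⟨g, hg, hgL, hgR⟩ := exists_mem_doubleCoset_avoiding x hVD hVD'
  refine ⟨g, fun ⟨v, hv, hvg⟩ => hgL ⟨v, ⟨hv, ?_⟩, hvg⟩, fun ⟨v, hv, hvg⟩ => hgR ⟨v, ⟨hv, ?_⟩, hvg⟩⟩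
  · exact mem_doubleCoset_of_leftClass_eq hvg.symm hg
  · exact mem_doubleCoset_of_rightClass_eq hvg.symm hg

theorem exists_superset_ncard_eq_index (hV : CosetSeparated H V) :
    ∃ T, V ⊆ T ∧ CosetSeparated H T ∧ T.ncard = H.index := by
  induction hn : H.index - V.ncard generalizing V with
  | zero => exact ⟨V, subset_rfl, hV, by have := hV.ncard_le_index; omega⟩
  | succ n ih =>
    obtain ⟨g, hl, hr⟩ := hV.exists_extension (by omega)
    have hg : g ∉ V := fun h => hl ⟨g, h, rfl⟩
    obtain ⟨T, hVT, hT⟩ := ih (hV.insert hl hr) (by rw [Set.ncard_insert_of_notMem hg]; omega)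
    exact ⟨T, (Set.subset_insert g V).trans hVT, hT⟩

theorem exists_transversal (hV : CosetSeparated H V) :
    ∃ T, IsLeftTransversal H T ∧ IsRightTransversal H T ∧ V ⊆ T := by
  obtain ⟨T, hVT, hT, hcard⟩ := hV.exists_superset_ncard_eq_index
  have key (f : G → G ⧸ H) (hf : T.InjOn f) (c : G ⧸ H) : ∃! t, t ∈ T ∧ f t = c := by
    have himage : f '' T = Set.univ := Set.eq_of_subset_of_ncard_le (Set.subset_univ _)
      (by rw [Set.ncard_univ, hf.ncard_image, hcard]; rfl)
    obtain ⟨t, ht, rfl⟩ := himage.symm ▸ Set.mem_univ c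
    exact ⟨t, ⟨ht, rfl⟩, fun t' ⟨ht', he⟩ => hf ht' ht he⟩
  exact ⟨T, fun g => key _ hT.1 (leftClass H g), fun g => key _ hT.2 (rightClass H g), hVT⟩

end CosetSeparated

section Distinct

variable {H : Subgroup G} {M N : Multiset G} {g : G}

theorem LeftDistinct.injOn (hN : LeftDistinct H N) :
    {y | y ∈ N}.InjOn (leftClass H) :=
  fun a ha b hb => inj_on_of_nodup_map hN a ha b hb

theorem RightDistinct.injOn (hN : RightDistinct H N) :
    {y | y ∈ N}.InjOn (rightClass H) :=
  fun a ha b hb => inj_on_of_nodup_map hN a ha b hb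

theorem LeftDistinct.of_le (hN : LeftDistinct H N) (hMN : M ≤ N) : LeftDistinct H M :=
  nodup_of_le (map_le_map hMN) hN

theorem RightDistinct.of_le (hN : RightDistinct H N) (hMN : M ≤ N) : RightDistinct H M :=
  nodup_of_le (map_le_map hMN) hN

theorem LeftDistinct.cons (hN : LeftDistinct H N)
    (hg : leftClass H g ∉ leftClass H '' {y | y ∈ N}) : LeftDistinct H (g ::ₘ N) := by
  rw [LeftDistinct, map_cons, nodup_cons]
  refine ⟨fun h => hg ?_, hN⟩
  obtain ⟨y, hy, he⟩ := mem_map.1 h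
  exact ⟨y, hy, he⟩

theorem RightDistinct.cons (hN : RightDistinct H N)
    (hg : rightClass H g ∉ rightClass H '' {y | y ∈ N}) : RightDistinct H (g ::ₘ N) := by
  rw [RightDistinct, map_cons, nodup_cons]
  refine ⟨fun h => hg ?_, hN⟩
  obtain ⟨y, hy, he⟩ := mem_map.1 h
  exact ⟨y, hy, he⟩

theorem LeftDistinct.card_le_ncard [Finite G] {x : G} (hN : LeftDistinct H N)
    (hND : ∀ y ∈ N, y ∈ doubleCoset x H H) :
    card N ≤ (leftClass H '' doubleCoset x H H).ncard := by
  rw [← card_map (leftClass H),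
    ← ncard_setOf_mem_of_nodup (show (N.map (leftClass H)).Nodup from hN)]
  refine Set.ncard_le_ncard fun c hc => ?_
  obtain ⟨y, hy, rfl⟩ := mem_map.1 hc
  exact ⟨y, hND y hy, rfl⟩

theorem cosetSeparated_replicate_add {t : G} (ht : t ∈ H) (k : ℕ)
    (hout : ∀ y ∈ N, y ∉ H) (hL : LeftDistinct H N) (hR : RightDistinct H N) :
    CosetSeparated H {y | y ∈ replicate k t + N} := by
  refine (CosetSeparated.insert ⟨hL.injOn, hR.injOn⟩ ?_ ?_).mono (t := insert t _)
    fun y hy => ?_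
  · exact fun ⟨y, hy, he⟩ => hout y hy (mem_of_leftClass_eq he.symm ht)
  · exact fun ⟨y, hy, he⟩ => hout y hy (mem_of_rightClass_eq he.symm ht)
  · rcases mem_add.1 hy with hy | hy
    · exact .inl (eq_of_mem_replicate hy)
    · exact .inr hy

end Distinct

section Reduction

/-- Two elements outside `H` in the same left (or right) coset: one move turns one of them into an
element of `H`. -/
theorem exists_nielsenEquiv_distinct_outside (H : Subgroup G) (S : Multiset G) :
    ∃ S', NielsenEquiv S S' ∧ LeftDistinct H (S'.filter fun x => x ∉ H) ∧
      RightDistinct H (S'.filter fun x => x ∉ H) := by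
  induction hn : card (S.filter fun x => x ∉ H) generalizing S with
  | zero => exact ⟨S, .refl S, by simp [card_eq_zero.1 hn, LeftDistinct, RightDistinct]⟩
  | succ n ih =>
    by_cases hd : LeftDistinct H (S.filter fun x => x ∉ H) ∧
        RightDistinct H (S.filter fun x => x ∉ H)
    · exact ⟨S, .refl S, hd⟩
    obtain ⟨S₁, hS₁, hn₁⟩ : ∃ S₁, NielsenEquiv S S₁ ∧ card (S₁.filter fun x => x ∉ H) = n := by
      rcases not_and_or.1 hd with hL | hR
      · obtain ⟨x, y, R, rfl, hx, hy, hxy⟩ := exists_eq_cons_cons_of_not_nodup_map_filter hL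
        have hyx : y⁻¹ * x ∈ H := by simpa using inv_mem (leftClass_eq_iff.1 hxy)
        refine ⟨_, NielsenEquiv.inv_mul_left_cons (mem_cons_self y R) x, ?_⟩
        simp_all [filter_cons_of_neg]
      · obtain ⟨x, y, R, rfl, hx, hy, hxy⟩ := exists_eq_cons_cons_of_not_nodup_map_filter hR
        have hxy : x * y⁻¹ ∈ H := rightClass_eq_iff.1 hxy
        refine ⟨_, NielsenEquiv.mul_inv_right_cons (mem_cons_self y R) x, ?_⟩
        simp_all [filter_cons_of_neg]
    obtain ⟨S', hS', hd'⟩ := ih S₁ hn₁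
    exact ⟨S', hS₁.trans hS', hd'⟩

variable {H : Subgroup G}

theorem exists_nielsenEquiv_normalForm {p : ℕ} (hp : p.Prime) (hH : Nat.card H = p ^ 2)
    (M : Multiset G) (hM : ∀ x ∈ M, x ∈ H) :
    (∃ t ∈ H, ∃ k, NielsenEquiv M (replicate k t)) ∨
      ∃ A B k, Subgroup.closure {A, B} = H ∧ NielsenEquiv M (B ::ₘ replicate (k + 1) A) := by
  induction M using Multiset.induction_on with
  | empty => exact .inl ⟨1, one_mem H, 0, .refl 0⟩
  | cons g M ih =>
    have hg := hM g (mem_cons_self g M)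
    rcases ih fun x hx => hM x (mem_cons_of_mem hx) with ⟨t, ht, k, hk⟩ | ⟨A, B, k, hAB, hk⟩
    · replace hk := hk.cons g
      obtain _ | k := k
      · exact .inl ⟨g, hg, 1, by simpa using hk⟩
      have hclosure : Subgroup.closure {x : G | x ∈ replicate (k + 1) t} = Subgroup.zpowers t := by
        rw [Subgroup.zpowers_eq_closure]
        congr 1
        ext x
        simp [mem_replicate]
      rcases Subgroup.mem_zpowers_or_closure_pair_eq hp hH hg ht with hgt | htg | hgen
      · refine .inl ⟨t, ht, k + 2, hk.trans ?_⟩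
        rw [replicate_succ t (k + 1)]
        exact .cons_of_inv_mul_mem_closure
          (hclosure ▸ mul_mem (inv_mem hgt) (Subgroup.mem_zpowers t))
      · refine .inl ⟨g, hg, k + 2, hk.trans ?_⟩
        have hmap := NielsenEquiv.add_map (M := {g}) (N := replicate (k + 1) t) (f := fun _ => g)
          fun y hy => ⟨1, one_mem _, y⁻¹ * g, ?_, by group⟩
        · simpa [map_const', ← singleton_add, add_comm, replicate_succ] using hmap
        · rw [eq_of_mem_replicate hy]
          refine mul_mem (inv_mem ?_) (Subgroup.subset_closure (mem_singleton_self g))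
          simpa [Subgroup.zpowers_eq_closure] using htg
      · exact .inr ⟨t, g, k, by rwa [Set.pair_comm], hk⟩
    · refine .inr ⟨A, B, k + 1, hAB, (hk.cons g).trans ?_⟩
      have hle : H ≤ Subgroup.closure {x | x ∈ B ::ₘ replicate (k + 1) A} :=
        hAB ▸ Subgroup.closure_mono (by simp [Set.insert_subset_iff, mem_replicate])
      rw [replicate_succ A (k + 1), cons_swap B A]
      exact .cons_of_inv_mul_mem_closure
        (hle (mul_mem (inv_mem hg) (hAB ▸ Subgroup.subset_closure (by simp))))

end Reduction

section Separation

variable {H : Subgroup G} [Finite G]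

theorem exists_nielsenEquiv_reposition (x : G) {base : Multiset G}
    (hbase : H ≤ Subgroup.closure {y | y ∈ base}) (F : Set G) (N : Multiset G)
    (hN : ∀ y ∈ N, y ∈ doubleCoset x H H)
    (hF : card N + F.ncard ≤ (leftClass H '' doubleCoset x H H).ncard) :
    ∃ N', NielsenEquiv (N + base) (N' + base) ∧ LeftDistinct H N' ∧ RightDistinct H N' ∧
      ∀ y ∈ N', y ∈ doubleCoset x H H ∧ leftClass H y ∉ leftClass H '' F ∧
        rightClass H y ∉ rightClass H '' F := by
  induction N using Multiset.induction_on with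
  | empty => exact ⟨0, .refl _, by simp [LeftDistinct], by simp [RightDistinct], by simp⟩
  | cons y N ih =>
    rw [card_cons] at hF
    obtain ⟨N', hN', hN'L, hN'R, hN'F⟩ := ih (fun z hz => hN z (mem_cons_of_mem hz)) (by omega)
    have hcard : card N' = card N := by simpa using hN'.card_eq.symm
    have hsize (f : G → G ⧸ H) :
        (f '' F ∪ f '' {z | z ∈ N'}).ncard < (leftClass H '' doubleCoset x H H).ncard := by
      have := Set.ncard_union_le (f '' F) (f '' {z | z ∈ N'})
      have := Set.ncard_image_le (f := f) (Set.toFinite F)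
      have := Set.ncard_image_le (f := f) (Set.toFinite {z | z ∈ N'})
      have := ncard_setOf_mem_le_card N'
      omega
    obtain ⟨g, hg, hgL, hgR⟩ := exists_mem_doubleCoset_avoiding x (hsize _) (hsize _)
    obtain ⟨h₁, hh₁, h₂, hh₂, rfl⟩ :=
      mem_doubleCoset.1 (doubleCoset_eq_of_mem (hN y (mem_cons_self y N)) ▸ hg)
    have hle : H ≤ Subgroup.closure {z | z ∈ N' + base} :=
      hbase.trans (Subgroup.closure_mono fun z hz => mem_add.2 (.inr hz))
    refine ⟨h₁ * y * h₂ ::ₘ N', ?_, hN'L.cons fun h => hgL (.inr h),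
      hN'R.cons fun h => hgR (.inr h), fun z hz => ?_⟩
    · rw [cons_add, cons_add]
      exact (hN'.cons y).trans (.cons_of_mem_closure (hle hh₁) (hle hh₂) y)
    · rcases mem_cons.1 hz with rfl | hz
      · exact ⟨hg, fun h => hgL (.inl h), fun h => hgR (.inl h)⟩
      · exact hN'F z hz

/-- If not, then `BK ⊆ KH` for `K = ⟨base⟩`, so `KH = G` and `KB` meets every left coset. -/
theorem exists_leftClass_mul_mul_not_mem {B : G} (hB : B ∈ H) {base : Multiset G}
    (hgen : Subgroup.closure {x | x ∈ B ::ₘ base} = ⊤)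
    (hsmall : (leftClass H '' {y | y ∈ base}).ncard < H.index) :
    ∃ u ∈ Subgroup.closure {y | y ∈ base}, ∃ v ∈ Subgroup.closure {y | y ∈ base},
      leftClass H (u * B * v) ∉ leftClass H '' {y | y ∈ base} := by
  set K := Subgroup.closure {y | y ∈ base}
  have hbaseK : ∀ y ∈ base, y ∈ K := fun y hy => Subgroup.subset_closure hy
  by_contra! hcon
  have hKH : (K : Set G) * (H : Set G) = Set.univ := by
    refine Subgroup.mul_eq_univ_of_forall_mul_mem (B := B)
      (top_le_iff.1 (hgen.ge.trans (Subgroup.closure_mono ?_))) fun v hv => ?_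
    · intro y hy
      rcases mem_cons.1 hy with rfl | hy
      exacts [.inl rfl, .inr (hbaseK y hy)]
    · obtain ⟨w, hw, he⟩ := hcon 1 (one_mem K) v hv
      exact ⟨w, hbaseK w hw, w⁻¹ * (B * v), by simpa using leftClass_eq_iff.1 he, by group⟩
  have himage : leftClass H '' {y | y ∈ base} = Set.univ := Set.eq_univ_of_forall fun c => by
    obtain ⟨g, rfl⟩ := QuotientGroup.mk_surjective c
    obtain ⟨a, ha, h, hh, rfl⟩ := hKH.symm ▸ Set.mem_univ g
    have := hcon a ha 1 (one_mem K)
    rw [mul_one, leftClass_mul_of_mem a hB] at this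
    show leftClass H (a * h) ∈ _
    rwa [leftClass_mul_of_mem a hh]
  rw [himage, Set.ncard_univ] at hsmall
  exact hsmall.ne rfl

/-- The right coset of the new element `z` is free as well: `Hz = Hy` with `y` outside `H` would
put `z` into `Hy`, whose left cosets are already taken. -/
theorem exists_nielsenEquiv_cosetSeparated_of_forall_leftClass_mem {A B : G} (hA : A ∈ H)
    (hB : B ∈ H) (k : ℕ) {N : Multiset G} (hout : ∀ y ∈ N, y ∉ H) (hL : LeftDistinct H N)
    (hR : RightDistinct H N)
    (hP : ∀ x ∈ N, ∀ h ∈ H, leftClass H (h * x) ∈ leftClass H '' {y | y ∈ N})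
    (hgen : Subgroup.closure {x | x ∈ B ::ₘ (replicate (k + 1) A + N)} = ⊤)
    (hcard : card (B ::ₘ (replicate (k + 1) A + N)) ≤ H.index) :
    ∃ M, NielsenEquiv (B ::ₘ (replicate (k + 1) A + N)) M ∧
      CosetSeparated H {x | x ∈ M} := by
  set base := replicate (k + 1) A + N
  have hAbase : A ∈ base := mem_add.2 (.inl (mem_replicate.2 ⟨by omega, rfl⟩))
  have hsmall : (leftClass H '' {y | y ∈ base}).ncard < H.index :=
    calc _ ≤ {y | y ∈ base}.ncard := Set.ncard_image_le (Set.toFinite _)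
      _ ≤ (insert A {y | y ∈ N}).ncard := Set.ncard_le_ncard fun y hy => by
        rcases mem_add.1 hy with hy | hy
        exacts [.inl (eq_of_mem_replicate hy), .inr hy]
      _ ≤ card N + 1 := (Set.ncard_insert_le _ _).trans (by simpa using ncard_setOf_mem_le_card N)
      _ < H.index := by simp only [base, card_cons, card_add, card_replicate] at hcard; omega
  obtain ⟨u, hu, v, hv, hz⟩ := exists_leftClass_mul_mul_not_mem hB hgen hsmall
  refine ⟨u * B * v ::ₘ base, .cons_of_mem_closure hu hv B, ?_⟩
  rw [show {y | y ∈ u * B * v ::ₘ base} = insert (u * B * v) {y | y ∈ base} by ext; simp]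
  refine (cosetSeparated_replicate_add hA (k + 1) hout hL hR).insert hz ?_
  rintro ⟨w, hw, hwz⟩
  rcases mem_add.1 hw with hw | hw
  · rw [eq_of_mem_replicate hw] at hwz
    exact hz ⟨A, hAbase, leftClass_eq_iff.2 (mul_mem (inv_mem hA) (mem_of_rightClass_eq hwz hA))⟩
  · obtain ⟨y, hy, he⟩ := hP w hw _ (rightClass_eq_iff.1 hwz.symm)
    exact hz ⟨y, mem_add.2 (.inr hy), by rwa [inv_mul_cancel_right] at he⟩

theorem exists_mem_zpowers_rightClass_mul_ne {A B x : G} (hAB : Subgroup.closure {A, B} = H)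
    (hAx : leftClass H (A * x) ≠ leftClass H x) :
    ∃ v ∈ Subgroup.zpowers A, rightClass H (x * (B * v)) ≠ rightClass H x := by
  by_contra! hcon
  have hH := Subgroup.closure_pair_le_of_mem_of_mul_mem
    (rightClass_mul_eq_iff.1 (by simpa using hcon 1 (one_mem _)))
    (rightClass_mul_eq_iff.1 (hcon A (Subgroup.mem_zpowers A)))
  rw [Set.pair_comm, hAB] at hH
  exact hAx (leftClass_eq_of_le_stabilizer_rightClass hH
    (mem_doubleCoset.2 ⟨A, hAB ▸ Subgroup.subset_closure (by simp), 1, one_mem H, by simp⟩)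
    (mem_doubleCoset_self H H x))

theorem card_filter_mem_doubleCoset_add_two_le {x h₀ : G} {N : Multiset G}
    (hL : LeftDistinct H (x ::ₘ N)) (hh₀ : h₀ ∈ H)
    (hfree : leftClass H (h₀ * x) ∉ leftClass H '' {y | y ∈ x ::ₘ N}) :
    card (N.filter (· ∈ doubleCoset x H H)) + 2 ≤ (leftClass H '' doubleCoset x H H).ncard := by
  set Y := N.filter (· ∈ doubleCoset x H H)
  have hYN : x ::ₘ Y ≤ x ::ₘ N := cons_le_cons x (filter_le _ N)
  have hW := (hL.of_le hYN).cons fun ⟨y, hy, he⟩ => hfree ⟨y, mem_of_le hYN hy, he⟩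
  refine (by simp : card Y + 2 = card (h₀ * x ::ₘ x ::ₘ Y)) ▸ hW.card_le_ncard fun y hy => ?_
  rcases mem_cons.1 hy with rfl | hy
  · exact mem_doubleCoset.2 ⟨h₀, hh₀, 1, one_mem H, by simp⟩
  rcases mem_cons.1 hy with rfl | hy
  exacts [mem_doubleCoset_self H H _, (mem_filter.1 hy).2]

/-- The double coset `D = HxH` has a free left coset `h₀xH`. After moving the other elements of
`D` out of the way, `B` is replaced by `A x B v`, whose left coset `AxH` and right coset `HxBv`
lie in `D` and differ from those of `x`. -/
theorem exists_nielsenEquiv_cosetSeparated_of_leftClass_mul_ne {A B x h₀ : G}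
    (hAB : Subgroup.closure {A, B} = H) (k : ℕ) {N : Multiset G} (hout : ∀ y ∈ x ::ₘ N, y ∉ H)
    (hL : LeftDistinct H (x ::ₘ N)) (hR : RightDistinct H (x ::ₘ N))
    (hAx : leftClass H (A * x) ≠ leftClass H x) (hh₀ : h₀ ∈ H)
    (hfree : leftClass H (h₀ * x) ∉ leftClass H '' {y | y ∈ x ::ₘ N}) :
    ∃ M, NielsenEquiv (B ::ₘ (replicate (k + 1) A + x ::ₘ N)) M ∧
      CosetSeparated H {y | y ∈ M} := by
  have hA : A ∈ H := hAB ▸ Subgroup.subset_closure (by simp)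
  have hB : B ∈ H := hAB ▸ Subgroup.subset_closure (by simp)
  have hx : x ∉ H := hout x (mem_cons_self x N)
  have hxD : x ∈ doubleCoset x H H := mem_doubleCoset_self H H x
  obtain ⟨v, hv, hxv⟩ := exists_mem_zpowers_rightClass_mul_ne hAB hAx
  have hBv : B * v ∈ H := mul_mem hB (Subgroup.zpowers_le.2 hA hv)
  set z := A * x * (B * v)
  have hzD : z ∈ doubleCoset x H H := mem_doubleCoset.2 ⟨A, hA, B * v, hBv, rfl⟩
  have hxz : CosetSeparated H {x, z} := .pair_mul_mul hA hBv hAx hxv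
  set Y := N.filter (· ∈ doubleCoset x H H)
  set R := N.filter (· ∉ doubleCoset x H H)
  have hcount : card Y + 2 ≤ (leftClass H '' doubleCoset x H H).ncard :=
    card_filter_mem_doubleCoset_add_two_le hL hh₀ hfree
  have hxz2 : ({x, z} : Set G).ncard ≤ 2 := (Set.ncard_insert_le _ _).trans (by simp)
  have hbase : H ≤ Subgroup.closure {y | y ∈ B ::ₘ (replicate (k + 1) A + x ::ₘ R)} :=
    hAB ▸ Subgroup.closure_mono (by simp [Set.insert_subset_iff, mem_replicate])
  obtain ⟨Y', hY', hY'L, hY'R, hY'D⟩ := exists_nielsenEquiv_reposition x hbase {x, z} Y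
    (fun y hy => (mem_filter.1 hy).2) (by omega)
  set rest := replicate (k + 1) A + x ::ₘ (Y' + R)
  have hArest : A ∈ Subgroup.closure {y | y ∈ rest} := Subgroup.subset_closure (by simp [rest])
  have hxrest : x ∈ Subgroup.closure {y | y ∈ rest} := Subgroup.subset_closure (by simp [rest])
  refine ⟨z ::ₘ rest, ?_, ?_⟩
  · calc B ::ₘ (replicate (k + 1) A + x ::ₘ N)
        = Y + B ::ₘ (replicate (k + 1) A + x ::ₘ R) := by
          rw [← filter_add_not (· ∈ doubleCoset x H H) N]; simp only [← singleton_add]; abel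
      NielsenEquiv _ (Y' + B ::ₘ (replicate (k + 1) A + x ::ₘ R)) := hY'
      _ = B ::ₘ rest := by simp only [rest, ← singleton_add]; abel
      NielsenEquiv _ (z ::ₘ rest) := by
        convert NielsenEquiv.cons_of_mem_closure (mul_mem hArest hxrest)
          (Subgroup.zpowers_le.2 hArest hv) B using 2
        exact (mul_assoc _ _ _).symm
  · have hin : CosetSeparated H ({y | y ∈ Y'} ∪ {x, z}) :=
      CosetSeparated.union ⟨hY'L.injOn, hY'R.injOn⟩ hxz fun a ha b hb =>
        ⟨fun h => (hY'D a ha).2.1 ⟨b, hb, h.symm⟩, fun h => (hY'D a ha).2.2 ⟨b, hb, h.symm⟩⟩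
    have hRN : R ≤ x ::ₘ N := (filter_le _ N).trans (le_cons_self N x)
    have hout' := cosetSeparated_replicate_add hA (k + 1)
      (fun y hy => hout y (mem_of_le hRN hy)) (hL.of_le hRN) (hR.of_le hRN)
    refine (hin.union_of_subset_doubleCoset (x := x) hout' ?_ fun b hb => ?_).mono fun y hy => ?_
    · rintro a (ha | rfl | rfl)
      exacts [(hY'D a ha).1, hxD, hzD]
    · rcases mem_add.1 hb with hb | hb
      · exact eq_of_mem_replicate hb ▸ not_mem_doubleCoset_of_mem hx hA
      · exact (mem_filter.1 hb).2
    simp only [rest, Set.mem_ofPred_eq, mem_cons, mem_add] at hy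
    simp only [Set.mem_union, Set.mem_ofPred_eq, Set.mem_insert_iff, Set.mem_singleton_iff, mem_add]
    tauto

/-- If `A` fixes the left coset `xH`, then `AB` does not (as `h₀` does not), and replacing every
`A` by `AB` leads back to the previous case. -/
theorem exists_nielsenEquiv_cosetSeparated_of_exists_leftClass_not_mem {A B : G}
    (hAB : Subgroup.closure {A, B} = H) (k : ℕ) {N : Multiset G} (hout : ∀ y ∈ N, y ∉ H)
    (hL : LeftDistinct H N) (hR : RightDistinct H N)
    (hP : ∃ x ∈ N, ∃ h ∈ H, leftClass H (h * x) ∉ leftClass H '' {y | y ∈ N}) :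
    ∃ M, NielsenEquiv (B ::ₘ (replicate (k + 1) A + N)) M ∧
      CosetSeparated H {x | x ∈ M} := by
  obtain ⟨x, hx, h₀, hh₀, hfree⟩ := hP
  obtain ⟨N, rfl⟩ := exists_cons_of_mem hx
  by_cases hAx : leftClass H (A * x) = leftClass H x
  swap
  · exact exists_nielsenEquiv_cosetSeparated_of_leftClass_mul_ne hAB k hout hL hR hAx hh₀ hfree
  have hABx : leftClass H (A * B * x) ≠ leftClass H x := by
    intro hABx
    have hH := Subgroup.closure_pair_le_of_mem_of_mul_mem (leftClass_mul_eq_iff.1 hAx)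
      (leftClass_mul_eq_iff.1 hABx)
    rw [hAB] at hH
    exact hfree ⟨x, mem_cons_self x N, (leftClass_mul_eq_iff.2 (hH hh₀)).symm⟩
  have hswap : NielsenEquiv (B ::ₘ (replicate (k + 1) A + x ::ₘ N))
      (B ::ₘ (replicate (k + 1) (A * B) + x ::ₘ N)) := by
    have := NielsenEquiv.add_map (N := replicate (k + 1) A) (M := B ::ₘ x ::ₘ N) (f := (· * B))
      fun y _ => ⟨1, one_mem _, B, Subgroup.subset_closure (mem_cons_self _ _), by group⟩
    convert this using 1 <;> simp only [map_replicate, ← singleton_add] <;> abel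
  obtain ⟨M, hM, hMT⟩ := exists_nielsenEquiv_cosetSeparated_of_leftClass_mul_ne
    ((Subgroup.closure_pair_mul_left A B).trans hAB) k hout hL hR hABx hh₀ hfree
  exact ⟨M, hswap.trans hM, hMT⟩

theorem exists_nielsenEquiv_cosetSeparated_of_closure_pair {A B : G}
    (hAB : Subgroup.closure {A, B} = H) (k : ℕ) {N : Multiset G} (hout : ∀ y ∈ N, y ∉ H)
    (hL : LeftDistinct H N) (hR : RightDistinct H N)
    (hgen : Subgroup.closure {x | x ∈ B ::ₘ (replicate (k + 1) A + N)} = ⊤)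
    (hcard : card (B ::ₘ (replicate (k + 1) A + N)) ≤ H.index) :
    ∃ M, NielsenEquiv (B ::ₘ (replicate (k + 1) A + N)) M ∧
      CosetSeparated H {x | x ∈ M} := by
  by_cases hP : ∃ x ∈ N, ∃ h ∈ H, leftClass H (h * x) ∉ leftClass H '' {y | y ∈ N}
  · exact exists_nielsenEquiv_cosetSeparated_of_exists_leftClass_not_mem hAB k hout hL hR hP
  · push Not at hP
    exact exists_nielsenEquiv_cosetSeparated_of_forall_leftClass_mem
      (hAB ▸ Subgroup.subset_closure (by simp)) (hAB ▸ Subgroup.subset_closure (by simp))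
      k hout hL hR hP hgen hcard

end Separation

end

/-- for a prime `p`, a finite group `G` and a subgroup `H`
isomorphic to `C_p × C_p`, every generating multiset `S` with `|S| ≤ [G:H]` is
Nielsen equivalent to a multiset contained in a left-right transversal of `H`. -/
theorem stmt12 {G : Type*} [Group G] [Finite G] (p : ℕ) (hp : p.Prime)
    (H : Subgroup G)
    (hiso : Nonempty (↥H ≃* (Multiplicative (ZMod p) × Multiplicative (ZMod p))))
    (S : Multiset G) (hgen : Subgroup.closure {x : G | x ∈ S} = ⊤)
    (hcard : S.card ≤ H.index) :
    ∃ S' : Multiset G, NielsenEquiv S S' ∧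
      ∃ T : Set G, IsLeftTransversal H T ∧ IsRightTransversal H T ∧ ∀ x ∈ S', x ∈ T := by
  suffices ∃ M, NielsenEquiv S M ∧ CosetSeparated H {x | x ∈ M} by
    obtain ⟨M, hM, hMT⟩ := this
    obtain ⟨T, hTL, hTR, hsub⟩ := hMT.exists_transversal
    exact ⟨M, hM, T, hTL, hTR, fun x hx => hsub hx⟩
  have hH : Nat.card H = p ^ 2 := by
    have : Fact p.Prime := ⟨hp⟩
    rw [Nat.card_congr hiso.some.toEquiv, Nat.card_prod, Nat.card_congr Multiplicative.toAdd,
      Nat.card_zmod, sq]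
  obtain ⟨S₁, hS₁, hL, hR⟩ := exists_nielsenEquiv_distinct_outside H S
  have hout : ∀ y ∈ S₁.filter (· ∉ H), y ∉ H := fun y hy => (Multiset.mem_filter.1 hy).2
  replace hS₁ : NielsenEquiv S (S₁.filter (· ∈ H) + S₁.filter (· ∉ H)) := by
    rwa [Multiset.filter_add_not]
  rcases exists_nielsenEquiv_normalForm hp hH _ fun x hx => (Multiset.mem_filter.1 hx).2 with
    ⟨t, ht, k, hk⟩ | ⟨A, B, k, hAB, hk⟩
  · exact ⟨_, hS₁.trans (hk.add_right _), cosetSeparated_replicate_add ht k hout hL hR⟩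
  · have hS := hS₁.trans (hk.add_right _)
    rw [Multiset.cons_add] at hS
    obtain ⟨M, hM, hMT⟩ := exists_nielsenEquiv_cosetSeparated_of_closure_pair hAB k hout hL hR
      (top_le_iff.1 (hgen ▸ hS.closure_le)) (hS.card_eq ▸ hcard)
    exact ⟨M, hS.trans hM, hMT⟩
end

section
/- Let G be a group, H ≤ G a subgroup of finite index, and g ∈ G with HgH ≠ Hg⁻¹H. Let S be a finite multiset of elements of the double coset HgH such that every right coset of H contained in HgH contains exactly two elements of S and every left coset of H contained in HgH contains exactly two elements of S. Then S can be partitioned into two multisets A and B such that the multiset A ∪ B⁻¹ (where B⁻¹ is the multiset of inverses of elements of B) is diagonal with respect to H, i.e. no two of its elements lie in the same left coset of H and no two lie in the same right coset of H. -/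
open scoped Classical

/-! Call two elements of `S` partners when they lie in the same left coset, resp. the same right
coset, of `H`. Each element has exactly one partner of each kind, so we get two fixed-point-free
involutions `σ`, `τ` of (an indexing of) `S`. Since `σ` conjugates `σ * τ` to its inverse, `σ`
permutes the orbits of `σ * τ`, and a dihedral parity argument shows it fixes none of them. Picking
one orbit out of each pair exchanged by `σ` colours `S` so that `σ` and `τ` both swap colours, i.e.
each colour class meets every left and every right coset at most once. With `A`, `B` the two
classes, no element of `A ⊆ HgH` shares a coset with an element of `B⁻¹ ⊆ Hg⁻¹H`, since these
double cosets are distinct, hence disjoint. -/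

theorem Function.Involutive.exists_set_apply_mem_iff_notMem {Q : Type*} {s : Q → Q}
    (hs : Function.Involutive s) (hfix : ∀ q, s q ≠ q) : ∃ C : Set Q, ∀ q, s q ∈ C ↔ q ∉ C := by
  refine ⟨{q | WellOrderingRel q (s q)}, fun q => ?_⟩
  simp only [Set.mem_ofPred_eq, hs q]
  refine ⟨fun h h' => asymm h h', fun h => ?_⟩
  rcases trichotomous_of WellOrderingRel q (s q) with h' | h' | h'
  · exact absurd h' h
  · exact absurd h'.symm (hfix q)
  · exact h'

namespace Equiv.Perm

variable {ι : Type*} {σ τ : Perm ι}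

theorem apply_zpow_mul_apply_of_involutive (hσ : Function.Involutive σ)
    (hτ : Function.Involutive τ) (m : ℤ) (x : ι) :
    σ (((σ * τ) ^ m) x) = ((σ * τ) ^ (-m)) (σ x) := by
  have hflip : SemiconjBy σ (σ * τ) (σ * τ)⁻¹ := by
    ext y
    simp [inv_def, hσ _, Function.Involutive.symm_eq_self_of_involutive σ hσ,
      Function.Involutive.symm_eq_self_of_involutive τ hτ]
  rw [← mul_apply, (hflip.zpow_right m).eq, inv_zpow', mul_apply]

theorem not_sameCycle_mul_apply (hσ : Function.Involutive σ) (hτ : Function.Involutive τ)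
    (hσ' : ∀ x, σ x ≠ x) (hτ' : ∀ x, τ x ≠ x) (x : ι) : ¬ (σ * τ).SameCycle x (σ x) := by
  -- σ x = (σ * τ) ^ k x would make σ (k even) or τ (k odd) fix (σ * τ) ^ (k / 2) x.
  rintro ⟨k, hk⟩
  obtain ⟨m, rfl | rfl⟩ := Int.even_or_odd' k
  · apply hσ' (((σ * τ) ^ m) x)
    rw [apply_zpow_mul_apply_of_involutive hσ hτ, ← hk, ← mul_apply, ← zpow_add]
    ring_nf
  · apply hτ' (((σ * τ) ^ m) x)
    calc τ (((σ * τ) ^ m) x) = σ (((σ * τ) ^ (m + 1)) x) := by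
          rw [add_comm, zpow_one_add, mul_apply, mul_apply, hσ]
        _ = ((σ * τ) ^ m) x := by
          rw [apply_zpow_mul_apply_of_involutive hσ hτ, ← hk, ← mul_apply, ← zpow_add]
          ring_nf

theorem exists_coloring_of_involutive (hσ : Function.Involutive σ) (hτ : Function.Involutive τ)
    (hσ' : ∀ x, σ x ≠ x) (hτ' : ∀ x, τ x ≠ x) :
    ∃ c : ι → Prop, ∀ x, (c (σ x) ↔ ¬ c x) ∧ (c (τ x) ↔ ¬ c x) := by
  let Q := Quotient (SameCycle.setoid (σ * τ))
  let s : Q → Q := Quotient.map σ fun x _ ⟨k, hk⟩ =>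
    ⟨-k, hk ▸ (apply_zpow_mul_apply_of_involutive hσ hτ k x).symm⟩
  have hs : Function.Involutive s := by
    rintro ⟨x⟩
    exact congrArg _ (hσ x)
  have hs' : ∀ q, s q ≠ q := by
    rintro ⟨x⟩ h
    exact not_sameCycle_mul_apply hσ hτ hσ' hτ' x (Quotient.exact h).symm
  obtain ⟨C, hC⟩ := hs.exists_set_apply_mem_iff_notMem hs'
  refine ⟨fun x => (⟦x⟧ : Q) ∈ C, fun x => ⟨hC ⟦x⟧, ?_⟩⟩
  have hτx : (⟦τ x⟧ : Q) = s ⟦(σ * τ) x⟧ := by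
    simp [s, hσ _]
  show (⟦τ x⟧ : Q) ∈ C ↔ (⟦x⟧ : Q) ∉ C
  rw [hτx, Quotient.sound (sameCycle_apply_left.2 (SameCycle.refl _ x))]
  exact hC ⟦x⟧

end Equiv.Perm

theorem Fintype.exists_involutive_of_card_fiber_eq_two {ι κ : Type*} [Fintype ι] (v : ι → κ)
    (hv : ∀ i, (Finset.univ.filter fun j => v j = v i).card = 2) :
    ∃ s : ι → ι, Function.Involutive s ∧ (∀ i, s i ≠ i) ∧ ∀ i j, v j = v i ↔ j = i ∨ j = s i := by
  have hpartner : ∀ i, ∃ a, (Finset.univ.filter fun j => v j = v i).erase i = {a} := fun i =>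
    Finset.card_eq_one.1 (by rw [Finset.card_erase_of_mem (by simp), hv i])
  choose s hs using hpartner
  have hmem : ∀ i j, j ≠ i ∧ v j = v i ↔ j = s i := fun i j => by
    simpa using Finset.ext_iff.1 (hs i) j
  have hne : ∀ i, s i ≠ i := fun i => ((hmem i (s i)).2 rfl).1
  have hfiber : ∀ i j, v j = v i ↔ j = i ∨ j = s i := fun i j => by
    by_cases hji : j = i
    · simp [hji]
    · simp [hji, ← hmem i j]
  refine ⟨s, fun i => ?_, hne, hfiber⟩
  have hsi : v (s i) = v i := ((hmem i (s i)).2 rfl).2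
  exact ((hfiber (s i) i).1 hsi.symm).resolve_left (hne i).symm |>.symm

theorem Set.injOn_setOf_of_fiber_eq_pair {ι κ : Type*} {v : ι → κ} {s : ι → ι}
    (hv : ∀ i j, v j = v i ↔ j = i ∨ j = s i) {p : ι → Prop} (hp : ∀ i, p (s i) ↔ ¬ p i) :
    Set.InjOn v {i | p i} := by
  intro i hi j hj hij
  rcases (hv i j).1 hij.symm with rfl | rfl
  · rfl
  · exact absurd hi ((hp i).1 hj)

theorem Fintype.exists_injOn_of_card_fiber_eq_two {ι α β : Type*} [Fintype ι] (f : ι → α)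
    (g : ι → β) (hf : ∀ i, (Finset.univ.filter fun j => f j = f i).card = 2)
    (hg : ∀ i, (Finset.univ.filter fun j => g j = g i).card = 2) :
    ∃ c : ι → Prop, Set.InjOn f {i | c i} ∧ Set.InjOn g {i | c i} ∧
      Set.InjOn f {i | ¬ c i} ∧ Set.InjOn g {i | ¬ c i} := by
  obtain ⟨σ, hσ, hσ', hσf⟩ := exists_involutive_of_card_fiber_eq_two f hf
  obtain ⟨τ, hτ, hτ', hτg⟩ := exists_involutive_of_card_fiber_eq_two g hg
  obtain ⟨c, hc⟩ := Equiv.Perm.exists_coloring_of_involutive (σ := hσ.toPerm σ) (τ := hτ.toPerm τ)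
    hσ hτ hσ' hτ'
  exact ⟨c, Set.injOn_setOf_of_fiber_eq_pair hσf fun i => (hc i).1,
    Set.injOn_setOf_of_fiber_eq_pair hτg fun i => (hc i).2,
    Set.injOn_setOf_of_fiber_eq_pair hσf fun i => (hc i).1.not,
    Set.injOn_setOf_of_fiber_eq_pair hτg fun i => (hc i).2.not⟩

theorem Multiset.exists_add_eq_nodup_map_of_card_fiber_eq_two {α β γ : Type*} (S : Multiset α)
    (f : α → β) (g : α → γ) (hf : ∀ x ∈ S, (S.filter fun y => f y = f x).card = 2)
    (hg : ∀ x ∈ S, (S.filter fun y => g y = g x).card = 2) :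
    ∃ A B : Multiset α, A + B = S ∧
      (A.map f).Nodup ∧ (A.map g).Nodup ∧ (B.map f).Nodup ∧ (B.map g).Nodup := by
  have hcard : ∀ p : α → Prop, (Finset.univ.filter fun j : S => p j).card = (S.filter p).card := by
    intro p
    conv_rhs => rw [← Multiset.map_univ_coe S]
    rw [Multiset.filter_map, Multiset.card_map]
    rfl
  obtain ⟨c, hAf, hAg, hBf, hBg⟩ := Fintype.exists_injOn_of_card_fiber_eq_two
    (fun j : S => f j) (fun j : S => g j) (fun i => (hcard _).trans (hf i coe_mem))
    (fun i => (hcard _).trans (hg i coe_mem))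
  refine ⟨(Finset.univ.filter c).val.map (fun j : S => (j : α)),
    (Finset.univ.filter (¬ c ·)).val.map (fun j : S => (j : α)), ?_, ?_⟩
  · rw [← Multiset.map_add, Finset.filter_val, Finset.filter_val, Multiset.filter_add_not,
      map_univ_coe]
  · simp only [Multiset.map_map]
    refine ⟨Finset.nodup_map_iff_injOn.2 ?_, Finset.nodup_map_iff_injOn.2 ?_,
      Finset.nodup_map_iff_injOn.2 ?_, Finset.nodup_map_iff_injOn.2 ?_⟩ <;> simpa

section Cosets

variable {G : Type*} [Group G] {H : Subgroup G} {g x y : G}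

theorem dcoset_eq_doubleCoset (H : Subgroup G) (g : G) :
    dcoset H g = DoubleCoset.doubleCoset g H H := by
  ext x
  exact DoubleCoset.mem_doubleCoset.symm

theorem dcoset_eq_of_mem (hx : x ∈ dcoset H g) : dcoset H x = dcoset H g := by
  simp only [dcoset_eq_doubleCoset] at hx ⊢
  exact DoubleCoset.doubleCoset_eq_of_mem hx

theorem inv_mem_dcoset_inv (hx : x ∈ dcoset H g) : x⁻¹ ∈ dcoset H g⁻¹ := by
  obtain ⟨h₁, hh₁, h₂, hh₂, rfl⟩ := hx
  exact ⟨h₂⁻¹, H.inv_mem hh₂, h₁⁻¹, H.inv_mem hh₁, by group⟩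

theorem mk_ne_mk_of_dcoset_ne (h : dcoset H x ≠ dcoset H y) : (x : G ⧸ H) ≠ y := fun hxy =>
  h (dcoset_eq_of_mem ⟨1, H.one_mem, x⁻¹ * y, QuotientGroup.eq.1 hxy, by group⟩).symm

theorem mk_eq_mk_iff_mem_lcoset : (y : G ⧸ H) = x ↔ y ∈ lcoset x H := by
  rw [eq_comm, QuotientGroup.eq]
  rfl

theorem mk_inv_eq_mk_inv_iff_mem_rcoset : ((y⁻¹ : G) : G ⧸ H) = (x⁻¹ : G) ↔ y ∈ rcoset H x := by
  rw [QuotientGroup.eq, inv_inv]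
  rfl

theorem rightDistinct_iff_leftDistinct_map_inv {S : Multiset G} :
    RightDistinct H S ↔ LeftDistinct H (S.map (·⁻¹)) := by
  rw [LeftDistinct, Multiset.map_map]
  rfl

theorem leftDistinct_add_map_inv {A B : Multiset G} (hA : ∀ a ∈ A, a ∈ dcoset H g)
    (hB : ∀ b ∈ B, b ∈ dcoset H g) (hne : dcoset H g ≠ dcoset H g⁻¹) (hAl : LeftDistinct H A)
    (hBr : RightDistinct H B) : LeftDistinct H (A + B.map (·⁻¹)) := by
  rw [rightDistinct_iff_leftDistinct_map_inv] at hBr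
  rw [LeftDistinct, Multiset.map_add, Multiset.nodup_add]
  refine ⟨hAl, hBr, Multiset.disjoint_left.2 ?_⟩
  simp only [Multiset.mem_map]
  rintro _ ⟨a, ha, rfl⟩ ⟨_, ⟨b, hb, rfl⟩, hab⟩
  refine mk_ne_mk_of_dcoset_ne ?_ hab.symm
  rw [dcoset_eq_of_mem (hA a ha), dcoset_eq_of_mem (inv_mem_dcoset_inv (hB b hb))]
  exact hne

theorem rightDistinct_add_map_inv {A B : Multiset G} (hA : ∀ a ∈ A, a ∈ dcoset H g)
    (hB : ∀ b ∈ B, b ∈ dcoset H g) (hne : dcoset H g ≠ dcoset H g⁻¹) (hAr : RightDistinct H A)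
    (hBl : LeftDistinct H B) : RightDistinct H (A + B.map (·⁻¹)) := by
  rw [rightDistinct_iff_leftDistinct_map_inv, Multiset.map_add, Multiset.map_map, add_comm]
  simpa using leftDistinct_add_map_inv hB hA hne hBl hAr

end Cosets

theorem stmt15_general {G : Type*} [Group G] (H : Subgroup G) (g : G)
    (hne : dcoset H g ≠ dcoset H g⁻¹)
    (S : Multiset G) (hsub : ∀ x ∈ S, x ∈ dcoset H g)
    (hrow : ∀ a ∈ dcoset H g, (S.filter fun x => x ∈ rcoset H a).card = 2)
    (hcol : ∀ a ∈ dcoset H g, (S.filter fun x => x ∈ lcoset a H).card = 2) :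
    ∃ A B : Multiset G, A + B = S ∧
      LeftDistinct H (A + B.map fun x => x⁻¹) ∧
      RightDistinct H (A + B.map fun x => x⁻¹) := by
  obtain ⟨A, B, rfl, hAl, hAr, hBl, hBr⟩ := S.exists_add_eq_nodup_map_of_card_fiber_eq_two
    (fun x => (x : G ⧸ H)) (fun x => ((x⁻¹ : G) : G ⧸ H))
    (fun x hx => by simpa only [mk_eq_mk_iff_mem_lcoset] using hcol x (hsub x hx))
    (fun x hx => by simpa only [mk_inv_eq_mk_inv_iff_mem_rcoset] using hrow x (hsub x hx))
  have hA : ∀ a ∈ A, a ∈ dcoset H g := fun a ha => hsub a (Multiset.mem_add.2 (Or.inl ha))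
  have hB : ∀ b ∈ B, b ∈ dcoset H g := fun b hb => hsub b (Multiset.mem_add.2 (Or.inr hb))
  exact ⟨A, B, rfl, leftDistinct_add_map_inv hA hB hne hAl hBr,
    rightDistinct_add_map_inv hA hB hne hAr hBl⟩

/-- if `HgH ≠ Hg⁻¹H` and `S` is a multiset in `HgH` such that
every right coset and every left coset of `H` contained in `HgH` contains
exactly two elements of `S`, then `S` splits as `A ∪ B` with `A ∪ B⁻¹` diagonal
with respect to `H`. -/
theorem stmt15 {G : Type*} [Group G] (H : Subgroup G) [H.FiniteIndex] (g : G)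
    (hne : dcoset H g ≠ dcoset H g⁻¹)
    (S : Multiset G) (hsub : ∀ x ∈ S, x ∈ dcoset H g)
    (hrow : ∀ a ∈ dcoset H g, (S.filter fun x => x ∈ rcoset H a).card = 2)
    (hcol : ∀ a ∈ dcoset H g, (S.filter fun x => x ∈ lcoset a H).card = 2) :
    ∃ A B : Multiset G, A + B = S ∧
      LeftDistinct H (A + B.map fun x => x⁻¹) ∧
      RightDistinct H (A + B.map fun x => x⁻¹) :=
  stmt15_general H g hne S hsub hrow hcol
end
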